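/- arXiv:1004.5592 — 3 statements merged into one kernel-verified Lean document; each statement's English description precedes it below -/
import Mathlib

section
/- Let b ∈ (0,1) and t ∈ ℝ. Then there is a constant c = c(b) such that for all x ∈ ℝ, 𝒟^b(e^{-i t x|x|})(x) ≤ c(|t|^{b/2} + |t|^b |x|^b), where 𝒟^b g(x) = (∫_ℝ |g(x)-g(y)|²/|x-y|^{1+2b} dy)^{1/2}. -/
/-! Write `g(y) = e^{-ity|y|}` and `r = |x - y|`. Since `|x|x| - y|y|| ≤ (2|x| + r) r` and
`|e^{ia} - e^{ic}| ≤ min(2, |a - c|)`, we get `|g(x) - g(y)|² ≤ min(4, 2t²r⁴) + min(4, 8t²x²r²)`.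
For `0 < s < p`, splitting the half-line at `R = (A/B)^{1/p}` gives
`∫₀^∞ min(A, B r^p) r^{-1-s} dr ≤ (1/(p-s) + 1/s) A^{1-s/p} B^{s/p}`; with `s = 2b` and `p = 4`,
resp. `p = 2`, the two terms contribute multiples of `|t|^b` and `(|t||x|)^{2b}`. -/

open MeasureTheory
open scoped ENNReal

/-- The Stein derivative of order `b`:
`𝒟^b h(x) = (∫ |h(x)-h(y)|² / |x-y|^{1+2b} dy)^{1/2}`. -/
noncomputable def steinD (b : ℝ) (h : ℝ → ℂ) (x : ℝ) : ℝ≥0∞ :=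
  (∫⁻ y : ℝ, (‖h x - h y‖₊ : ℝ≥0∞) ^ 2 / ENNReal.ofReal |x - y| ^ (1 + 2 * b)) ^ ((1 : ℝ) / 2)

open Real Set

lemma norm_cexp_mul_I_sub_cexp_mul_I_le (a c : ℝ) :
    ‖Complex.exp (a * Complex.I) - Complex.exp (c * Complex.I)‖ ≤ min 2 |a - c| := by
  refine le_min ?_ ?_
  · calc _ ≤ ‖Complex.exp (a * Complex.I)‖ + ‖Complex.exp (c * Complex.I)‖ := norm_sub_le _ _
      _ = 2 := by rw [Complex.norm_exp_ofReal_mul_I, Complex.norm_exp_ofReal_mul_I]; norm_num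
  · have h : Complex.exp (a * Complex.I) - Complex.exp (c * Complex.I) =
        Complex.exp (c * Complex.I) * (Complex.exp (Complex.I * ↑(a - c)) - 1) := by
      rw [mul_sub, ← Complex.exp_add]; push_cast; ring_nf
    rw [h, norm_mul, Complex.norm_exp_ofReal_mul_I, one_mul]
    exact Real.norm_exp_I_mul_ofReal_sub_one_le

lemma abs_mul_abs_sub_mul_abs_le (x y : ℝ) :
    |(x * |x| - y * |y|)| ≤ (2 * |x| + |x - y|) * |x - y| := by
  have hy : |y| ≤ |x| + |x - y| := by
    linarith [abs_sub_abs_le_abs_sub y x, abs_sub_comm y x]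
  calc |(x * |x| - y * |y|)| = |x * (|x| - |y|) + |y| * (x - y)| := by ring_nf
    _ ≤ |x| * |x - y| + |y| * |x - y| := by
      refine (abs_add_le _ _).trans (add_le_add ?_ ?_)
      · rw [abs_mul]
        exact mul_le_mul_of_nonneg_left (abs_abs_sub_abs_le_abs_sub x y) (abs_nonneg x)
      · rw [abs_mul, abs_abs]
    _ ≤ (2 * |x| + |x - y|) * |x - y| := by nlinarith [abs_nonneg (x - y)]

lemma min_add_le_min_add_min {a b c : ℝ} (ha : 0 ≤ a) (hb : 0 ≤ b) (hc : 0 ≤ c) :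
    min c (a + b) ≤ min c a + min c b := by
  simp only [min_def]; split_ifs <;> linarith

lemma norm_sq_cexp_sub_cexp_le (t x y : ℝ) :
    ‖Complex.exp (-Complex.I * t * x * |x|) - Complex.exp (-Complex.I * t * y * |y|)‖ ^ 2 ≤
      min 4 (2 * t ^ 2 * |x - y| ^ 4) + min 4 (8 * (t * x) ^ 2 * |x - y| ^ 2) := by
  set r := |x - y|
  have hphase : ∀ z : ℝ, -Complex.I * t * z * |z| = ((-(t * (z * |z|)) : ℝ) : ℂ) * Complex.I := by
    intro z; push_cast; ring
  have hdiff : |-(t * (x * |x|)) - -(t * (y * |y|))| ≤ |t| * ((2 * |x| + r) * r) := by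
    rw [← abs_neg, show -(-(t * (x * |x|)) - -(t * (y * |y|))) = t * (x * |x| - y * |y|) by ring,
      abs_mul]
    exact mul_le_mul_of_nonneg_left (abs_mul_abs_sub_mul_abs_le x y) (abs_nonneg t)
  have hnorm := (norm_cexp_mul_I_sub_cexp_mul_I_le _ _).trans (min_le_min_left 2 hdiff)
  rw [← hphase, ← hphase] at hnorm
  set Δ := Complex.exp (-Complex.I * t * x * |x|) - Complex.exp (-Complex.I * t * y * |y|)
  have hsq : (|t| * ((2 * |x| + r) * r)) ^ 2 ≤ 2 * t ^ 2 * r ^ 4 + 8 * (t * x) ^ 2 * r ^ 2 :=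
    calc (|t| * ((2 * |x| + r) * r)) ^ 2 = t ^ 2 * r ^ 2 * (2 * |x| + r) ^ 2 := by
          rw [mul_pow, sq_abs]; ring
      _ ≤ t ^ 2 * r ^ 2 * (8 * x ^ 2 + 2 * r ^ 2) := by
          gcongr; nlinarith [sq_nonneg (2 * |x| - r), sq_abs x]
      _ = 2 * t ^ 2 * r ^ 4 + 8 * (t * x) ^ 2 * r ^ 2 := by ring
  have hΔ : ‖Δ‖ ^ 2 ≤ min 4 ((|t| * ((2 * |x| + r) * r)) ^ 2) := by
    refine le_min ?_ (pow_le_pow_left₀ (norm_nonneg _) (hnorm.trans (min_le_right _ _)) 2)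
    nlinarith [hnorm.trans (min_le_left _ _), norm_nonneg Δ]
  exact hΔ.trans <| (min_le_min_left 4 hsq).trans <|
    min_add_le_min_add_min (by positivity) (by positivity) (by norm_num)

lemma lintegral_comp_abs (f : ℝ → ℝ≥0∞) :
    ∫⁻ x, f |x| = 2 * ∫⁻ x in Ioi 0, f x := by
  have hpos : ∫⁻ x in Ioi 0, f |x| = ∫⁻ x in Ioi 0, f x :=
    setLIntegral_congr_fun measurableSet_Ioi fun x hx ↦ by rw [abs_of_pos hx]
  have hneg : ∫⁻ x in Iic 0, f |x| = ∫⁻ x in Ioi 0, f x := by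
    rw [← setLIntegral_congr Iio_ae_eq_Iic, ← lintegral_indicator measurableSet_Iio,
      ← lintegral_indicator measurableSet_Ioi, ← lintegral_neg_eq_self]
    congr 1 with x
    simp +contextual [indicator, abs_of_pos]
  rw [← lintegral_add_compl _ measurableSet_Ioi, compl_Ioi, hpos, hneg, two_mul]

lemma setLIntegral_Ioc_rpow {q R : ℝ} (hq : -1 < q) (hR : 0 ≤ R) :
    ∫⁻ r in Ioc 0 R, ENNReal.ofReal (r ^ q) = ENNReal.ofReal (R ^ (q + 1) / (q + 1)) := by
  rw [← ofReal_integral_eq_lintegral_ofReal, ← intervalIntegral.integral_of_le hR,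
    integral_rpow (Or.inl hq), Real.zero_rpow (by linarith), sub_zero]
  · exact (intervalIntegrable_iff_integrableOn_Ioc_of_le hR).1
      (intervalIntegral.intervalIntegrable_rpow' hq)
  · filter_upwards [ae_restrict_mem measurableSet_Ioc] with r hr using rpow_nonneg hr.1.le _

lemma setLIntegral_Ioi_rpow {q R : ℝ} (hq : q < -1) (hR : 0 < R) :
    ∫⁻ r in Ioi R, ENNReal.ofReal (r ^ q) = ENNReal.ofReal (-R ^ (q + 1) / (q + 1)) := by
  rw [← ofReal_integral_eq_lintegral_ofReal (integrableOn_Ioi_rpow_of_lt hq hR),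
    integral_Ioi_rpow_of_lt hq hR]
  filter_upwards [ae_restrict_mem measurableSet_Ioi] with r hr using rpow_nonneg (hR.trans hr).le _

lemma ofReal_min_div_rpow {A B p s r : ℝ} (hr : 0 < r) :
    ENNReal.ofReal (min A (B * r ^ p)) / ENNReal.ofReal r ^ (1 + s) =
      ENNReal.ofReal (min (A * r ^ (-(1 + s))) (B * r ^ (p - (1 + s)))) := by
  rw [ENNReal.ofReal_rpow_of_pos hr, ← ENNReal.ofReal_div_of_pos (rpow_pos_of_pos hr _),
    rpow_neg hr.le, rpow_sub hr, ← div_eq_mul_inv, ← mul_div_assoc,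
    ← min_div_div_right (rpow_pos_of_pos hr _).le]

lemma setLIntegral_Ioi_min_div_rpow_le {A B p s : ℝ} (hA : 0 < A) (hB : 0 ≤ B) (hs : 0 < s)
    (hsp : s < p) :
    ∫⁻ r in Ioi 0, ENNReal.ofReal (min A (B * r ^ p)) / ENNReal.ofReal r ^ (1 + s) ≤
      ENNReal.ofReal ((1 / (p - s) + 1 / s) * (A ^ (1 - s / p) * B ^ (s / p))) := by
  rcases hB.eq_or_lt with rfl | hB
  · simp [min_eq_right hA.le]
  set R := (A / B) ^ (1 / p)
  have hR : 0 < R := rpow_pos_of_pos (div_pos hA hB) _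
  have hnear : ∫⁻ r in Ioc 0 R, ENNReal.ofReal (min A (B * r ^ p)) / ENNReal.ofReal r ^ (1 + s) ≤
      ENNReal.ofReal (B * R ^ (p - s) / (p - s)) :=
    calc _ ≤ ∫⁻ r in Ioc 0 R, ENNReal.ofReal B * ENNReal.ofReal (r ^ (p - (1 + s))) :=
          setLIntegral_mono' measurableSet_Ioc fun r hr ↦ by
            rw [← ENNReal.ofReal_mul hB.le]
            exact (ofReal_min_div_rpow hr.1).trans_le
              (ENNReal.ofReal_le_ofReal (min_le_right _ _))
      _ = ENNReal.ofReal (B * R ^ (p - s) / (p - s)) := by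
          rw [lintegral_const_mul' _ _ ENNReal.ofReal_ne_top,
            setLIntegral_Ioc_rpow (by linarith) hR.le, ← ENNReal.ofReal_mul hB.le,
            show p - (1 + s) + 1 = p - s by ring, mul_div_assoc]
  have hfar : ∫⁻ r in Ioi R, ENNReal.ofReal (min A (B * r ^ p)) / ENNReal.ofReal r ^ (1 + s) ≤
      ENNReal.ofReal (A * R ^ (-s) / s) :=
    calc _ ≤ ∫⁻ r in Ioi R, ENNReal.ofReal A * ENNReal.ofReal (r ^ (-(1 + s))) :=
          setLIntegral_mono' measurableSet_Ioi fun r hr ↦ by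
            rw [← ENNReal.ofReal_mul hA.le]
            exact (ofReal_min_div_rpow (hR.trans hr)).trans_le
              (ENNReal.ofReal_le_ofReal (min_le_left _ _))
      _ = ENNReal.ofReal (A * R ^ (-s) / s) := by
          rw [lintegral_const_mul' _ _ ENNReal.ofReal_ne_top,
            setLIntegral_Ioi_rpow (by linarith) hR, ← ENNReal.ofReal_mul hA.le, show -(1 + s) + 1 = -s by ring, neg_div_neg_eq,
            mul_div_assoc]
  have hp : 0 < p := hs.trans hsp
  have hBR : B * R ^ (p - s) = A ^ (1 - s / p) * B ^ (s / p) := by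
    rw [← rpow_mul (div_pos hA hB).le, show 1 / p * (p - s) = 1 - s / p by field_simp,
      div_rpow hA.le hB.le, rpow_sub hB, rpow_one]
    field_simp
  have hAR : A * R ^ (-s) = A ^ (1 - s / p) * B ^ (s / p) := by
    rw [← rpow_mul (div_pos hA hB).le, show 1 / p * -s = -(s / p) by ring,
      div_rpow hA.le hB.le, rpow_neg hA.le, rpow_neg hB.le, rpow_sub hA, rpow_one]
    field_simp
  rw [← Ioc_union_Ioi_eq_Ioi hR.le, lintegral_union measurableSet_Ioi (Ioc_disjoint_Ioi le_rfl)]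
  refine (add_le_add hnear hfar).trans ?_
  rw [← ENNReal.ofReal_add (by positivity) (by positivity), hBR, hAR]
  exact (congrArg ENNReal.ofReal (by ring)).le

lemma lintegral_min_div_abs_sub_rpow_le {A B p s : ℝ} (hA : 0 < A) (hB : 0 ≤ B) (hs : 0 < s)
    (hsp : s < p) (x : ℝ) :
    ∫⁻ y, ENNReal.ofReal (min A (B * |x - y| ^ p)) / ENNReal.ofReal |x - y| ^ (1 + s) ≤
      ENNReal.ofReal (2 * (1 / (p - s) + 1 / s) * (A ^ (1 - s / p) * B ^ (s / p))) := by
  rw [lintegral_sub_left_eq_self (fun z ↦ ENNReal.ofReal (min A (B * |z| ^ p)) /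
      ENNReal.ofReal |z| ^ (1 + s)) x,
    lintegral_comp_abs fun r ↦ ENNReal.ofReal (min A (B * r ^ p)) / ENNReal.ofReal r ^ (1 + s),
    mul_assoc, ENNReal.ofReal_mul zero_le_two, ENNReal.ofReal_ofNat]
  gcongr
  exact setLIntegral_Ioi_min_div_rpow_le hA hB hs hsp

lemma mul_sq_rpow {c : ℝ} (hc : 0 ≤ c) (y a : ℝ) : (c * y ^ 2) ^ a = c ^ a * (|y| ^ a) ^ 2 := by
  rw [mul_rpow hc (sq_nonneg y), ← sq_abs, rpow_pow_comm (abs_nonneg y)]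

lemma exists_lintegral_min_quartic_div_le {b : ℝ} (hb0 : 0 < b) (hb2 : b < 2) :
    ∃ C > 0, ∀ t x : ℝ, ∫⁻ y, ENNReal.ofReal (min 4 (2 * t ^ 2 * |x - y| ^ 4)) /
      ENNReal.ofReal |x - y| ^ (1 + 2 * b) ≤ ENNReal.ofReal (C * (|t| ^ (b / 2)) ^ 2) := by
  have : 0 < 4 - 2 * b := by linarith
  refine ⟨2 * (1 / (4 - 2 * b) + 1 / (2 * b)) * (4 ^ (1 - b / 2) * 2 ^ (b / 2)), by positivity,
    fun t x ↦ ?_⟩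
  have h := lintegral_min_div_abs_sub_rpow_le (A := 4) (B := 2 * t ^ 2) (p := 4) (s := 2 * b)
    (by norm_num) (by positivity) (by linarith) (by linarith) x
  rw [show 2 * b / 4 = b / 2 by ring, mul_sq_rpow zero_le_two] at h
  simp only [rpow_ofNat] at h
  convert h using 2
  ring

lemma exists_lintegral_min_quadratic_div_le {b : ℝ} (hb0 : 0 < b) (hb1 : b < 1) :
    ∃ C > 0, ∀ t x : ℝ, ∫⁻ y, ENNReal.ofReal (min 4 (8 * (t * x) ^ 2 * |x - y| ^ 2)) /
      ENNReal.ofReal |x - y| ^ (1 + 2 * b) ≤ ENNReal.ofReal (C * (|t| ^ b * |x| ^ b) ^ 2) := by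
  have : 0 < 2 - 2 * b := by linarith
  refine ⟨2 * (1 / (2 - 2 * b) + 1 / (2 * b)) * (4 ^ (1 - b) * 8 ^ b), by positivity,
    fun t x ↦ ?_⟩
  have h := lintegral_min_div_abs_sub_rpow_le (A := 4) (B := 8 * (t * x) ^ 2) (p := 2)
    (s := 2 * b) (by norm_num) (by positivity) (by linarith) (by linarith) x
  rw [show 2 * b / 2 = b by ring, mul_sq_rpow (by norm_num), abs_mul,
    mul_rpow (abs_nonneg _) (abs_nonneg _)] at h
  simp only [rpow_ofNat] at h
  convert h using 2
  ring

lemma ENNReal.rpow_half_ofReal_add_le {C₁ C₂ u v : ℝ} (hC₁ : 0 ≤ C₁) (hC₂ : 0 ≤ C₂) (hu : 0 ≤ u)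
    (hv : 0 ≤ v) :
    (ENNReal.ofReal (C₁ * u ^ 2) + ENNReal.ofReal (C₂ * v ^ 2)) ^ (1 / 2 : ℝ) ≤
      ENNReal.ofReal (√(C₁ + C₂) * (u + v)) := by
  rw [← ENNReal.ofReal_add (by positivity) (by positivity),
    ENNReal.ofReal_rpow_of_nonneg (by positivity) (by norm_num), ← sqrt_eq_rpow]
  refine ENNReal.ofReal_le_ofReal (sqrt_le_iff.2 ⟨by positivity, ?_⟩)
  rw [mul_pow, sq_sqrt (by positivity)]
  nlinarith [mul_nonneg hC₁ (mul_nonneg hu hv), mul_nonneg hC₂ (mul_nonneg hu hv),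
    mul_nonneg hC₁ (sq_nonneg v), mul_nonneg hC₂ (sq_nonneg u)]

/-- For `b ∈ (0,1)` there is `c = c(b)` such that
`𝒟^b(e^{-itx|x|})(x) ≤ c (|t|^{b/2} + |t|^b |x|^b)` for all `t, x`. -/
theorem steinD_linear_BO_group (b : ℝ) (hb : b ∈ Set.Ioo (0 : ℝ) 1) :
    ∃ c : ℝ, 0 < c ∧ ∀ t x : ℝ,
      steinD b (fun y : ℝ => Complex.exp (-Complex.I * (t : ℂ) * (y : ℂ) * (|y| : ℝ))) x ≤
        ENNReal.ofReal (c * (|t| ^ (b / 2) + |t| ^ b * |x| ^ b)) := by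
  obtain ⟨hb0, hb1⟩ := hb
  obtain ⟨C₁, hC₁, h₁⟩ := exists_lintegral_min_quartic_div_le hb0 (by linarith)
  obtain ⟨C₂, hC₂, h₂⟩ := exists_lintegral_min_quadratic_div_le hb0 hb1
  refine ⟨√(C₁ + C₂), by positivity, fun t x ↦ ?_⟩
  calc steinD b _ x
      ≤ (∫⁻ y, (ENNReal.ofReal (min 4 (2 * t ^ 2 * |x - y| ^ 4)) /
          ENNReal.ofReal |x - y| ^ (1 + 2 * b) +
          ENNReal.ofReal (min 4 (8 * (t * x) ^ 2 * |x - y| ^ 2)) /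
          ENNReal.ofReal |x - y| ^ (1 + 2 * b))) ^ (1 / 2 : ℝ) := by
        unfold steinD
        gcongr with y
        rw [← ENNReal.add_div, ← ENNReal.ofReal_add (by positivity) (by positivity),
          ← ENNReal.ofReal_coe_nnreal, coe_nnnorm, ← ENNReal.ofReal_pow (norm_nonneg _)]
        gcongr
        exact norm_sq_cexp_sub_cexp_le t x y
    _ ≤ (ENNReal.ofReal (C₁ * (|t| ^ (b / 2)) ^ 2) +
          ENNReal.ofReal (C₂ * (|t| ^ b * |x| ^ b) ^ 2)) ^ (1 / 2 : ℝ) := by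
        rw [lintegral_add_left (by fun_prop)]
        gcongr
        exacts [h₁ t x, h₂ t x]
    _ ≤ _ := ENNReal.rpow_half_ofReal_add_le hC₁.le hC₂.le (by positivity) (by positivity)
end

section
/- Let p ∈ (1,∞) and f ∈ L^p(ℝ). Suppose there exists x₀ ∈ ℝ such that the one-sided limits f(x₀⁺) and f(x₀⁻) exist and f(x₀⁺) ≠ f(x₀⁻). Then for every δ > 0 the Stein derivative 𝒟^{1/p} f is not in L^p(B(x₀, δ)); consequently f does not belong to the Bessel potential space L^p_{1/p}(ℝ). -/
/-!
Near a jump the difference quotient cannot be small: if `f` is within a quarter of the jump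
`R - L` of `R` just right of `x₀` and of `L` just left of it, then for `x = x₀ + t` every `y`
in `(x₀ - t, x₀)` has `‖f x - f y‖ ≥ ‖R - L‖ / 2` and `|x - y| ≤ 2t`.  Integrating over these
`y` gives `𝒟^{1/p} f(x)² ≳ t · t^{-1-2/p}`, i.e. `𝒟^{1/p} f(x)^p ≳ t⁻¹`, and `t⁻¹` is not
integrable at `t = 0`.
-/

open MeasureTheory
open scoped ENNReal

open Set

lemma lintegral_inv_sub_Ioo_eq_top {a b : ℝ} (hab : a < b) :
    ∫⁻ x in Ioo a b, (ENNReal.ofReal (x - a))⁻¹ = ⊤ := by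
  have hnot : ¬ IntegrableOn (fun x => (x - a)⁻¹) (Ioo a b) := by
    rw [← intervalIntegrable_iff_integrableOn_Ioo_of_le hab.le, intervalIntegrable_sub_inv_iff]
    simp [hab.ne, left_mem_uIcc]
  contrapose! hnot
  refine ⟨(measurable_id.sub_const a).inv.aestronglyMeasurable, ?_⟩
  rw [hasFiniteIntegral_def, setLIntegral_congr_fun measurableSet_Ioo fun x hx => ?_]
  · exact hnot.lt_top
  · rw [Real.enorm_eq_ofReal_abs, abs_of_pos (inv_pos.2 (sub_pos.2 hx.1)),
      ENNReal.ofReal_inv_of_pos (sub_pos.2 hx.1)]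

lemma setLIntegral_Ioo_eq_top_of_inv_sub_le {g : ℝ → ℝ≥0∞} {a b : ℝ} {C : ℝ≥0∞} (hab : a < b)
    (hC : C ≠ 0) (hg : ∀ x ∈ Ioo a b, C * (ENNReal.ofReal (x - a))⁻¹ ≤ g x) :
    ∫⁻ x in Ioo a b, g x = ⊤ := by
  refine top_unique ?_
  calc ⊤ = C * ∫⁻ x in Ioo a b, (ENNReal.ofReal (x - a))⁻¹ := by
        rw [lintegral_inv_sub_Ioo_eq_top hab, ENNReal.mul_top hC]
    _ = ∫⁻ x in Ioo a b, C * (ENNReal.ofReal (x - a))⁻¹ :=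
        (lintegral_const_mul C (measurable_id.sub_const a).ennreal_ofReal.inv).symm
    _ ≤ ∫⁻ x in Ioo a b, g x := setLIntegral_mono' measurableSet_Ioo hg

lemma exists_pos_norm_sub_gt_of_tendsto_nhdsWithin {E : Type*} [SeminormedAddCommGroup E]
    {f : ℝ → E} {x₀ : ℝ} {L R : E} (hL : Filter.Tendsto f (nhdsWithin x₀ (Iio x₀)) (nhds L))
    (hR : Filter.Tendsto f (nhdsWithin x₀ (Ioi x₀)) (nhds R)) {ε : ℝ} (hε : 0 < ε) :
    ∃ η > 0, ∀ x ∈ Ioo x₀ (x₀ + η), ∀ y ∈ Ioo (x₀ - η) x₀, ‖R - L‖ - ε < ‖f x - f y‖ := by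
  rw [Metric.tendsto_nhdsWithin_nhds] at hL hR
  obtain ⟨ηL, hηL, hfL⟩ := hL (ε / 2) (half_pos hε)
  obtain ⟨ηR, hηR, hfR⟩ := hR (ε / 2) (half_pos hε)
  refine ⟨min ηL ηR, lt_min hηL hηR, fun x hx y hy => ?_⟩
  have hx' : dist (f x) R < ε / 2 := hfR hx.1 <| by
    rw [Real.dist_eq, abs_of_pos (sub_pos.2 hx.1)]; linarith [hx.2, min_le_right ηL ηR]
  have hy' : dist (f y) L < ε / 2 := hfL hy.2 <| by
    rw [Real.dist_eq, abs_of_neg (sub_neg.2 hy.2)]; linarith [hy.1, min_le_left ηL ηR]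
  have htriangle : ‖R - L‖ ≤ dist (f x) R + ‖f x - f y‖ + dist (f y) L := by
    rw [dist_comm, dist_eq_norm, dist_eq_norm]
    calc ‖R - L‖ = ‖(R - f x) + (f x - f y) + (f y - L)‖ := by abel_nf
      _ ≤ _ := norm_add₃_le
  linarith

lemma mul_volume_le_lintegral_steinD_integrand {b c r : ℝ} (hb : 0 ≤ 1 + 2 * b) (h : ℝ → ℂ)
    (x : ℝ) {S : Set ℝ} (hS : MeasurableSet S)
    (hSx : ∀ y ∈ S, c ≤ ‖h x - h y‖ ∧ |x - y| ≤ r) :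
    ENNReal.ofReal c ^ 2 / ENNReal.ofReal r ^ (1 + 2 * b) * volume S
      ≤ ∫⁻ y, (‖h x - h y‖₊ : ℝ≥0∞) ^ 2 / ENNReal.ofReal |x - y| ^ (1 + 2 * b) := by
  calc ENNReal.ofReal c ^ 2 / ENNReal.ofReal r ^ (1 + 2 * b) * volume S
      = ∫⁻ _ in S, ENNReal.ofReal c ^ 2 / ENNReal.ofReal r ^ (1 + 2 * b) :=
        (setLIntegral_const _ _).symm
    _ ≤ ∫⁻ y in S, (‖h x - h y‖₊ : ℝ≥0∞) ^ 2 / ENNReal.ofReal |x - y| ^ (1 + 2 * b) := by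
        refine setLIntegral_mono' hS fun y hy => ENNReal.div_le_div ?_ ?_
        · rw [← enorm_eq_nnnorm, ← ofReal_norm]
          exact pow_le_pow_left' (ENNReal.ofReal_le_ofReal (hSx y hy).1) 2
        · exact ENNReal.rpow_le_rpow (ENNReal.ofReal_le_ofReal (hSx y hy).2) hb
    _ ≤ _ := setLIntegral_le_lintegral _ _

lemma sq_div_two_mul_rpow_mul_rpow {p c t : ℝ} (hp : 0 < p) (hc : 0 ≤ c) (ht : 0 < t) :
    (c ^ 2 / (2 * t) ^ (1 + 2 * (1 / p)) * t) ^ (p / 2) = c ^ p / 2 ^ (p / 2 + 1) * t⁻¹ := by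
  have hexp : (1 + 2 * (1 / p)) * (p / 2) = p / 2 + 1 := by field_simp
  rw [Real.mul_rpow (by positivity) ht.le, Real.div_rpow (by positivity) (by positivity),
    ← Real.rpow_natCast, ← Real.rpow_mul hc, ← Real.rpow_mul (by positivity), hexp,
    Real.mul_rpow two_pos.le ht.le, Real.rpow_add_one ht.ne']
  field_simp
  norm_num

lemma steinD_rpow_ge_inv_sub {p c : ℝ} (hp : 0 < p) (hc : 0 ≤ c) {f : ℝ → ℂ} {x₀ x : ℝ}
    (hx : x₀ < x) (hjump : ∀ y ∈ Ioo (2 * x₀ - x) x₀, c ≤ ‖f x - f y‖) :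
    ENNReal.ofReal (c ^ p / 2 ^ (p / 2 + 1)) * (ENNReal.ofReal (x - x₀))⁻¹
      ≤ steinD (1 / p) f x ^ p := by
  set t := x - x₀
  have ht : 0 < t := sub_pos.2 hx
  have hlower := mul_volume_le_lintegral_steinD_integrand (b := 1 / p) (r := 2 * t)
    (by positivity) f x measurableSet_Ioo fun y hy => ⟨hjump y hy, by
      rw [abs_of_pos (by linarith [hy.2])]; linarith [hy.1]⟩
  rw [Real.volume_Ioo, show x₀ - (2 * x₀ - x) = t by ring, ← ENNReal.ofReal_pow hc,
    ENNReal.ofReal_rpow_of_pos (by positivity), ← ENNReal.ofReal_div_of_pos (by positivity),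
    ← ENNReal.ofReal_mul (by positivity)] at hlower
  calc ENNReal.ofReal (c ^ p / 2 ^ (p / 2 + 1)) * (ENNReal.ofReal t)⁻¹
      = ENNReal.ofReal (c ^ 2 / (2 * t) ^ (1 + 2 * (1 / p)) * t) ^ (p / 2) := by
        rw [ENNReal.ofReal_rpow_of_nonneg (by positivity) (by positivity),
          sq_div_two_mul_rpow_mul_rpow hp hc ht, ENNReal.ofReal_mul (by positivity),
          ENNReal.ofReal_inv_of_pos ht]
    _ ≤ steinD (1 / p) f x ^ p := by
        rw [steinD, ← ENNReal.rpow_mul, one_div_mul_eq_div]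
        exact ENNReal.rpow_le_rpow hlower (by positivity)

theorem steinD_jump_not_Lp_general (p : ℝ) (hp : 1 < p) (f : ℝ → ℂ)
    (x₀ : ℝ) (L R : ℂ)
    (hL : Filter.Tendsto f (nhdsWithin x₀ (Set.Iio x₀)) (nhds L))
    (hR : Filter.Tendsto f (nhdsWithin x₀ (Set.Ioi x₀)) (nhds R))
    (hLR : L ≠ R) :
    (∀ δ : ℝ, 0 < δ → ∫⁻ x in Metric.ball x₀ δ, steinD (1 / p) f x ^ p = ⊤) ∧
      (∫⁻ x : ℝ, steinD (1 / p) f x ^ p) = ⊤ := by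
  have hp₀ : 0 < p := zero_lt_one.trans hp
  have hc : 0 < ‖R - L‖ / 2 := half_pos (norm_pos_iff.2 (sub_ne_zero.2 hLR.symm))
  obtain ⟨η, hη, hjump⟩ := exists_pos_norm_sub_gt_of_tendsto_nhdsWithin hL hR hc
  have hball (δ : ℝ) (hδ : 0 < δ) : ∫⁻ x in Metric.ball x₀ δ, steinD (1 / p) f x ^ p = ⊤ := by
    have hsub : Ioo x₀ (x₀ + min δ η) ⊆ Metric.ball x₀ δ := fun x hx => by
      rw [Metric.mem_ball, Real.dist_eq, abs_of_pos (sub_pos.2 hx.1)]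
      linarith [hx.2, min_le_left δ η]
    have hIoo : ∫⁻ x in Ioo x₀ (x₀ + min δ η), steinD (1 / p) f x ^ p = ⊤ := by
      refine setLIntegral_Ioo_eq_top_of_inv_sub_le (by simpa using lt_min hδ hη)
        (C := ENNReal.ofReal ((‖R - L‖ / 2) ^ p / 2 ^ (p / 2 + 1)))
        (ENNReal.ofReal_pos.2 (by positivity)).ne' fun x hx => ?_
      refine steinD_rpow_ge_inv_sub hp₀ hc.le hx.1 fun y hy => ?_
      have hxη : x < x₀ + η := by linarith [hx.2, min_le_right δ η]
      have hfar := hjump x ⟨hx.1, hxη⟩ y ⟨by linarith [hy.1], hy.2⟩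
      linarith
    exact top_unique (hIoo ▸ lintegral_mono_set hsub)
  exact ⟨hball, top_unique (le_of_eq_of_le (hball 1 one_pos).symm (setLIntegral_le_lintegral _ _))⟩

/-- If `f ∈ L^p(ℝ)` has a jump discontinuity at `x₀` (one-sided limits exist and differ),
then `𝒟^{1/p} f ∉ L^p(B(x₀,δ))` for every `δ > 0`; consequently `𝒟^{1/p} f ∉ L^p(ℝ)`,
i.e. `f` is not in the Bessel potential space `L^p_{1/p}(ℝ)` (via Stein's
characterization). -/
theorem steinD_jump_not_Lp (p : ℝ) (hp : 1 < p) (f : ℝ → ℂ)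
    (hf : MemLp f (ENNReal.ofReal p)) (x₀ : ℝ) (L R : ℂ)
    (hL : Filter.Tendsto f (nhdsWithin x₀ (Set.Iio x₀)) (nhds L))
    (hR : Filter.Tendsto f (nhdsWithin x₀ (Set.Ioi x₀)) (nhds R))
    (hLR : L ≠ R) :
    (∀ δ : ℝ, 0 < δ → ∫⁻ x in Metric.ball x₀ δ, steinD (1 / p) f x ^ p = ⊤) ∧
      (∫⁻ x : ℝ, steinD (1 / p) f x ^ p) = ⊤ :=
  steinD_jump_not_Lp_general p hp f x₀ L R hL hR hLR
end

section
/- Let θ ∈ (-1,1) and for N ∈ ℕ let w_N be a smooth nondecreasing-in-|x| even function with w_N(x) = ⟨x⟩ = (1+x²)^{1/2} for |x| ≤ N, w_N(x) = 2N for |x| ≥ 3N, and 0 ≤ w_N' ≤ 1 on [0,∞). Then the family of weights w_N^θ satisfies the A₂ condition uniformly in N: there is a constant c = c(θ), independent of N, such that for every bounded interval Q, (1/|Q| ∫_Q w_N^θ)(1/|Q| ∫_Q w_N^{-θ}) ≤ c. -/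
open MeasureTheory Set

private lemma int_one_add_rpow (θ T : ℝ) (hθ : θ < 1) :
    ∫ x in (0:ℝ)..T, (1 + x) ^ (-θ) = ((1+T)^(1-θ) - 1) / (1-θ) := by
  have h : ∫ x in (0:ℝ)..T, (1 + x) ^ (-θ) = ∫ x in (1:ℝ)..(1+T), x ^ (-θ) := by
    simpa using (intervalIntegral.integral_comp_add_left (a := (0:ℝ)) (b := T)
      (fun x => x ^ (-θ)) 1)
  rw [h, integral_rpow (Or.inl (by linarith))]
  rw [show -θ + 1 = 1 - θ by ring, Real.one_rpow]

private lemma int_abs_sym (g : ℝ → ℝ) (hg : Continuous g) (hsym : ∀ x, g (-x) = g x)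
    (T : ℝ) : ∫ x in (-T)..T, g x = 2 * ∫ x in (0:ℝ)..T, g x := by
  have h1 : ∫ x in (-T)..(0:ℝ), g x = ∫ x in (0:ℝ)..T, g x := by
    have := intervalIntegral.integral_comp_neg (a := (0:ℝ)) (b := T) g
    simp only [neg_zero] at this
    rw [← this]
    exact intervalIntegral.integral_congr (fun x _ => hsym x)
  have h2 := intervalIntegral.integral_add_adjacent_intervals
    (hg.intervalIntegrable (μ := volume) (-T) 0) (hg.intervalIntegrable 0 T)
  rw [← h2, h1]; ring

private lemma truncA2_aux (θ : ℝ) (h0 : 0 ≤ θ) (h1 : θ < 1) (N : ℕ) (hN : 0 < N)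
    (w : ℝ → ℝ) (hsm : ContDiff ℝ (⊤ : ℕ∞) w)
    (heven : ∀ x : ℝ, w (-x) = w x)
    (hmid : ∀ x : ℝ, |x| ≤ (N : ℝ) → w x = Real.sqrt (1 + x ^ 2))
    (hout : ∀ x : ℝ, (3 * N : ℝ) ≤ |x| → w x = 2 * N)
    (hmono : ∀ x y : ℝ, 0 ≤ x → x ≤ y → w x ≤ w y)
    (a b : ℝ) (hab : a < b) :
    (1 / (b - a) * ∫ x in a..b, w x ^ θ) *
      (1 / (b - a) * ∫ x in a..b, w x ^ (-θ)) ≤ 32 / (1 - θ) + 8 := by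
  have hNr : (1:ℝ) ≤ N := by exact_mod_cast hN
  have hL : (0:ℝ) < b - a := by linarith
  -- w x = w |x|
  have hwabs : ∀ x : ℝ, w x = w |x| := by
    intro x
    rcases le_or_gt 0 x with h | h
    · rw [abs_of_nonneg h]
    · rw [abs_of_neg h, ← heven x]
  -- 1 ≤ w
  have hw1 : ∀ x : ℝ, 1 ≤ w x := by
    intro x
    rw [hwabs x]
    have h0' : w 0 = 1 := by
      rw [hmid 0 (by simp)]; norm_num
    calc (1:ℝ) = w 0 := h0'.symm
      _ ≤ w |x| := hmono 0 |x| le_rfl (abs_nonneg x)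
  -- w ≤ 2N
  have hw2N : ∀ x : ℝ, w x ≤ 2 * N := by
    intro x
    rw [hwabs x]
    rcases le_total |x| (3 * (N:ℝ)) with h | h
    · have h3 : w (3 * (N:ℝ)) = 2 * N := hout _ (by rw [abs_of_nonneg (by linarith)])
      calc w |x| ≤ w (3 * N) := hmono _ _ (abs_nonneg x) h
        _ = 2 * N := h3
    · rw [hout |x| (by rwa [abs_abs])]
  -- sqrt facts
  have s1 : ∀ y : ℝ, Real.sqrt (1 + y ^ 2) ≤ 1 + |y| := by
    intro y
    rw [show (1:ℝ) + |y| = Real.sqrt ((1 + |y|)^2) from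
      (Real.sqrt_sq (by positivity)).symm]
    apply Real.sqrt_le_sqrt
    have : |y|^2 = y^2 := sq_abs y
    nlinarith [abs_nonneg y]
  have s2 : ∀ y : ℝ, 1 + |y| ≤ 2 * Real.sqrt (1 + y ^ 2) := by
    intro y
    have ha : (1:ℝ) ≤ Real.sqrt (1 + y ^ 2) := by
      have hs := Real.sq_sqrt (show (0:ℝ) ≤ 1 + y ^ 2 by positivity)
      nlinarith [Real.sqrt_nonneg (1 + y ^ 2), sq_nonneg y]
    have hb : |y| ≤ Real.sqrt (1 + y ^ 2) := by
      rw [show |y| = Real.sqrt (y^2) from (Real.sqrt_sq_eq_abs y).symm]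
      apply Real.sqrt_le_sqrt; nlinarith
    linarith
  obtain ⟨u, hu_def⟩ : ∃ u : ℝ → ℝ, u = fun x => min (1 + |x|) (2 * (N:ℝ)) := ⟨_, rfl⟩
  have hu1 : ∀ x : ℝ, 1 ≤ u x := fun x => by
    simp only [hu_def]; exact le_min (by linarith [abs_nonneg x]) (by linarith)
  -- w ≤ 2 u
  have hwu : ∀ x : ℝ, w x ≤ 2 * u x := by
    intro x
    have hA : w x ≤ 2 * (1 + |x|) := by
      rcases le_total |x| (N:ℝ) with h | h
      · rw [hwabs x, hmid |x| (by rwa [abs_abs]), show |x|^2 = x^2 from sq_abs x]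
        linarith [s1 x, abs_nonneg x]
      · linarith [hw2N x]
    have hB : w x ≤ 2 * (2 * N) := by linarith [hw2N x]
    rcases min_cases (1 + |x|) (2 * (N:ℝ)) with ⟨hm, _⟩ | ⟨hm, _⟩ <;>
      simp only [hu_def] <;> rw [hm] <;> linarith
  -- u ≤ 2 w
  have huw : ∀ x : ℝ, u x ≤ 2 * w x := by
    intro x
    rw [hwabs x]
    rcases le_total |x| (N:ℝ) with h | h
    · rw [hmid |x| (by rwa [abs_abs]), show |x|^2 = x^2 from sq_abs x]
      calc u x ≤ 1 + |x| := by simp only [hu_def]; exact min_le_left _ _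
        _ ≤ 2 * Real.sqrt (1 + x ^ 2) := s2 x
    · have hwN : w (N:ℝ) = Real.sqrt (1 + (N:ℝ) ^ 2) :=
        hmid _ (by rw [abs_of_nonneg (by linarith)])
      have : (N:ℝ) ≤ w |x| := by
        calc (N:ℝ) = Real.sqrt ((N:ℝ)^2) := (Real.sqrt_sq (by linarith)).symm
          _ ≤ Real.sqrt (1 + (N:ℝ)^2) := Real.sqrt_le_sqrt (by linarith)
          _ = w N := hwN.symm
          _ ≤ w |x| := hmono _ _ (by linarith) h
      calc u x ≤ 2 * N := by simp only [hu_def]; exact min_le_right _ _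
        _ ≤ 2 * w |x| := by linarith
  -- distance from Q to the origin
  obtain ⟨d, hd0, hdle, hdge⟩ : ∃ d : ℝ, 0 ≤ d ∧ (∀ x ∈ Icc a b, d ≤ |x|) ∧
      (∀ x ∈ Icc a b, |x| ≤ d + (b - a)) := by
    rcases lt_or_ge 0 a with h | h
    · refine ⟨a, h.le, fun x hx => le_trans hx.1 (le_abs_self x), fun x hx => ?_⟩
      rw [abs_of_nonneg (by linarith [hx.1])]; linarith [hx.2]
    · rcases lt_or_ge b 0 with h2 | h2
      · refine ⟨-b, by linarith, fun x hx => ?_, fun x hx => ?_⟩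
        · rw [abs_of_neg (by linarith [hx.2] : x < 0)]; linarith [hx.2]
        · rw [abs_of_neg (by linarith [hx.2] : x < 0)]; linarith [hx.1]
      · refine ⟨0, le_rfl, fun x _ => abs_nonneg x, fun x hx => ?_⟩
        rw [abs_le]; exact ⟨by linarith [hx.1], by linarith [hx.2]⟩
  obtain ⟨L, hLdef⟩ : ∃ L : ℝ, L = b - a := ⟨_, rfl⟩
  rw [← hLdef] at hL
  simp only [← hLdef] at hdge
  rw [show b - a = L from hLdef.symm]
  obtain ⟨s, hs_def⟩ : ∃ s : ℝ, s = min (max (1 + d) L) (2 * (N:ℝ)) := ⟨_, rfl⟩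
  have hs1 : (1:ℝ) ≤ s := by
    rw [hs_def]
    exact le_min (le_trans (by linarith) (le_max_left (1 + d) L)) (by linarith)
  have hs_le2N : s ≤ 2 * (N:ℝ) := by rw [hs_def]; exact min_le_right _ _
  have hs_lemax : s ≤ max (1 + d) L := by rw [hs_def]; exact min_le_left _ _
  have hs0 : (0:ℝ) < s := by linarith
  have hsθpos : 0 < s ^ θ := Real.rpow_pos_of_pos hs0 θ
  -- pointwise upper bound on Q
  have hus : ∀ x ∈ Icc a b, u x ≤ 2 * s := by
    intro x hx
    rcases min_cases (max (1 + d) L) (2 * (N:ℝ)) with ⟨hm, _⟩ | ⟨hm, _⟩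
    · have hz : u x ≤ 1 + |x| := by simp only [hu_def]; exact min_le_left _ _
      have h2 := hdge x hx
      have h3 := le_max_left (1 + d) L
      have h4 := le_max_right (1 + d) L
      rw [hs_def, hm]; linarith
    · have hz : u x ≤ 2 * N := by simp only [hu_def]; exact min_le_right _ _
      rw [hs_def, hm]; linarith
  have hws : ∀ x ∈ Icc a b, w x ≤ 4 * s := fun x hx => by linarith [hwu x, hus x hx]
  -- integrability
  have hwc : Continuous w := hsm.continuous
  have hw0 : ∀ x, w x ≠ 0 := fun x => by linarith [hw1 x]
  have hiθ : IntervalIntegrable (fun x => w x ^ θ) volume a b :=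
    (hwc.rpow_const fun x => Or.inl (hw0 x)).intervalIntegrable a b
  have hiθ' : IntervalIntegrable (fun x => w x ^ (-θ)) volume a b :=
    (hwc.rpow_const fun x => Or.inl (hw0 x)).intervalIntegrable a b
  -- first factor
  have hF1 : 1 / L * ∫ x in a..b, w x ^ θ ≤ 4 * s ^ θ := by
    have hint : ∫ x in a..b, w x ^ θ ≤ L * (4 * s) ^ θ := by
      have h := intervalIntegral.integral_mono_on hab.le hiθ intervalIntegrable_const
        (fun x hx => Real.rpow_le_rpow (by linarith [hw1 x]) (hws x hx) h0)
      rwa [intervalIntegral.integral_const, smul_eq_mul, ← hLdef] at h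
    have h4s : (4 * s) ^ θ ≤ 4 * s ^ θ := by
      rw [Real.mul_rpow (by norm_num) hs0.le]
      have h44 : (4:ℝ) ^ θ ≤ 4 := by
        calc (4:ℝ) ^ θ ≤ 4 ^ (1:ℝ) := Real.rpow_le_rpow_of_exponent_le (by norm_num) h1.le
          _ = 4 := Real.rpow_one 4
      nlinarith [Real.rpow_nonneg hs0.le θ, Real.rpow_nonneg (show (0:ℝ) ≤ 4 by norm_num) θ]
    rw [one_div, inv_mul_eq_div, div_le_iff₀ hL]
    calc (∫ x in a..b, w x ^ θ) ≤ L * (4 * s) ^ θ := hint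
      _ ≤ L * (4 * s ^ θ) := by nlinarith
      _ = 4 * s ^ θ * L := by ring
  -- pointwise bound for the negative power
  have hnegpt : ∀ x : ℝ, w x ^ (-θ) ≤ 2 * u x ^ (-θ) := by
    intro x
    have hu0 : (0:ℝ) < u x := by linarith [hu1 x]
    have h2 : w x ^ (-θ) ≤ (u x / 2) ^ (-θ) :=
      Real.rpow_le_rpow_of_nonpos (by positivity) (by linarith [huw x]) (by linarith)
    have h3 : (u x / 2) ^ (-θ) = u x ^ (-θ) * 2 ^ θ := by
      rw [Real.div_rpow hu0.le (by norm_num : (0:ℝ) ≤ 2),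
        Real.rpow_neg (by norm_num : (0:ℝ) ≤ 2), div_eq_mul_inv, inv_inv]
    have h4 : (2:ℝ) ^ θ ≤ 2 := by
      calc (2:ℝ) ^ θ ≤ 2 ^ (1:ℝ) := Real.rpow_le_rpow_of_exponent_le one_le_two h1.le
        _ = 2 := Real.rpow_one 2
    have h5 : 0 ≤ u x ^ (-θ) := Real.rpow_nonneg hu0.le _
    have h6 : 0 ≤ (2:ℝ) ^ θ := Real.rpow_nonneg (by norm_num) θ
    calc w x ^ (-θ) ≤ u x ^ (-θ) * 2 ^ θ := h3 ▸ h2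
      _ ≤ 2 * u x ^ (-θ) := by nlinarith
  -- second factor
  have h1θ : 0 < 1 - θ := by linarith
  have hsnθ : 0 ≤ s ^ (-θ) := Real.rpow_nonneg hs0.le _
  have hF2 : 1 / L * ∫ x in a..b, w x ^ (-θ) ≤ (8 / (1 - θ) + 2) * s ^ (-θ) := by
    rw [one_div, inv_mul_eq_div, div_le_iff₀ hL]
    rcases le_total L (1 + d) with hcase | hcase
    · -- short interval
      have hpt : ∀ x ∈ Icc a b, w x ^ (-θ) ≤ 2 * s ^ (-θ) := by
        intro x hx
        have hsu : s ≤ u x := by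
          simp only [hu_def]
          refine le_min ?_ (by linarith)
          calc s ≤ max (1 + d) L := hs_lemax
            _ = 1 + d := max_eq_left hcase
            _ ≤ 1 + |x| := by linarith [hdle x hx]
        have := Real.rpow_le_rpow_of_nonpos hs0 hsu (neg_nonpos.mpr h0)
        linarith [hnegpt x]
      have hint : ∫ x in a..b, w x ^ (-θ) ≤ (b - a) * (2 * s ^ (-θ)) := by
        have h := intervalIntegral.integral_mono_on hab.le hiθ' intervalIntegrable_const hpt
        rwa [intervalIntegral.integral_const, smul_eq_mul] at h
      have h8 : 0 ≤ 8 / (1 - θ) := by positivity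
      nlinarith [mul_nonneg (mul_nonneg h8 hsnθ) hL.le, hLdef]
    · -- long interval
      obtain ⟨T, hT_def⟩ : ∃ T : ℝ, T = d + L := ⟨_, rfl⟩
      simp only [← hT_def] at hdge
      have haT : -T ≤ a := neg_le_of_abs_le (hdge a ⟨le_rfl, hab.le⟩)
      have hbT : b ≤ T := le_of_abs_le (hdge b ⟨hab.le, le_rfl⟩)
      have hsL : s ≤ L := le_trans hs_lemax (by rw [max_eq_right hcase])
      have hs2N : s ≤ 2 * (N:ℝ) := hs_le2N
      obtain ⟨g, hg_def⟩ : ∃ g : ℝ → ℝ, g = fun x => (1 + |x|) ^ (-θ) := ⟨_, rfl⟩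
      have hgc : Continuous g := by
        rw [hg_def]
        exact (continuous_const.add continuous_abs).rpow_const (fun x => Or.inl (ne_of_gt (by positivity : (0:ℝ) < 1 + |x|)))
      have hg0 : ∀ x : ℝ, 0 ≤ g x := fun x => by
        simp only [hg_def]; exact Real.rpow_nonneg (by positivity) _
      have hNθ : (0:ℝ) ≤ (2 * (N:ℝ)) ^ (-θ) := Real.rpow_nonneg (by linarith) _
      have hpt : ∀ x ∈ Icc a b, w x ^ (-θ) ≤ 2 * g x + 2 * (2 * (N:ℝ)) ^ (-θ) := by
        intro x hx
        have hu' : u x ^ (-θ) ≤ g x + (2 * (N:ℝ)) ^ (-θ) := by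
          rcases min_cases (1 + |x|) (2 * (N:ℝ)) with ⟨hm, _⟩ | ⟨hm, _⟩
          · have he : u x ^ (-θ) = g x := by simp only [hu_def, hg_def]; rw [hm]
            linarith [hNθ]
          · have he : u x ^ (-θ) = (2 * (N:ℝ)) ^ (-θ) := by
              simp only [hu_def]; rw [hm]
            linarith [hg0 x]
        linarith [hnegpt x]
      have hint1 : ∫ x in a..b, w x ^ (-θ) ≤
          2 * (∫ x in a..b, g x) + L * (2 * (2 * (N:ℝ)) ^ (-θ)) := by
        have hgi : IntervalIntegrable (fun x => 2 * g x) volume a b :=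
          (continuous_const.mul hgc).intervalIntegrable a b
        have := intervalIntegral.integral_mono_on hab.le hiθ'
          (hgi.add intervalIntegrable_const) hpt
        rwa [intervalIntegral.integral_add hgi intervalIntegrable_const,
          intervalIntegral.integral_const_mul, intervalIntegral.integral_const,
          smul_eq_mul, ← hLdef] at this
      have hint2 : ∫ x in a..b, g x ≤ ∫ x in (-T)..T, g x :=
        intervalIntegral.integral_mono_interval haT hab.le hbT
          (ae_of_all _ hg0) (hgc.intervalIntegrable _ _)
      have hTnn : (0:ℝ) ≤ T := by rw [hT_def]; linarith
      have hint3 : ∫ x in (-T)..T, g x = 2 * (((1 + T) ^ (1 - θ) - 1) / (1 - θ)) := by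
        rw [int_abs_sym g hgc (fun x => by simp only [hg_def, abs_neg]) T]
        have he : ∫ x in (0:ℝ)..T, g x = ∫ x in (0:ℝ)..T, (1 + x) ^ (-θ) := by
          apply intervalIntegral.integral_congr
          intro x hx
          rw [uIcc_of_le hTnn] at hx
          simp only [hg_def]
          rw [abs_of_nonneg hx.1]
        rw [he, int_one_add_rpow θ T h1]
      have hbnd : ((1 + T) ^ (1 - θ) - 1) / (1 - θ) ≤ 2 / (1 - θ) * (L * s ^ (-θ)) := by
        have hTL : 1 + T ≤ 2 * L := by rw [hT_def]; linarith
        have h2L : (1 + T) ^ (1 - θ) ≤ (2 * L) ^ (1 - θ) :=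
          Real.rpow_le_rpow (by linarith) hTL (by linarith)
        have h2L' : (2 * L) ^ (1 - θ) = 2 * L * (2 * L) ^ (-θ) := by
          rw [show (1:ℝ) - θ = 1 + -θ by ring, Real.rpow_add (by linarith) 1 (-θ),
            Real.rpow_one]
        have h2Ls : (2 * L) ^ (-θ) ≤ s ^ (-θ) :=
          Real.rpow_le_rpow_of_nonpos hs0 (by linarith) (by linarith)
        have hnum : (1 + T) ^ (1 - θ) - 1 ≤ 2 * (L * s ^ (-θ)) := by
          have hm := mul_le_mul_of_nonneg_left h2Ls (by linarith : (0:ℝ) ≤ 2 * L)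
          linarith
        calc ((1 + T) ^ (1 - θ) - 1) / (1 - θ)
            ≤ (2 * (L * s ^ (-θ))) / (1 - θ) := (div_le_div_iff_of_pos_right h1θ).mpr hnum
          _ = 2 / (1 - θ) * (L * s ^ (-θ)) := by ring
      have hs2N' : (2 * (N:ℝ)) ^ (-θ) ≤ s ^ (-θ) :=
        Real.rpow_le_rpow_of_nonpos hs0 hs2N (by linarith)
      have hga : ∫ x in a..b, g x ≤ 2 * (((1 + T) ^ (1 - θ) - 1) / (1 - θ)) :=
        le_of_le_of_eq hint2 hint3
      calc ∫ x in a..b, w x ^ (-θ)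
          ≤ 2 * (∫ x in a..b, g x) + L * (2 * (2 * (N:ℝ)) ^ (-θ)) := hint1
        _ ≤ 4 * (((1 + T) ^ (1 - θ) - 1) / (1 - θ)) + 2 * L * s ^ (-θ) := by
            have hm := mul_le_mul_of_nonneg_left hs2N' hL.le
            linarith [hga, hm]
        _ ≤ 4 * (2 / (1 - θ) * (L * s ^ (-θ))) + 2 * L * s ^ (-θ) := by linarith
        _ = (8 / (1 - θ) + 2) * s ^ (-θ) * L := by ring
  -- combine
  have hPos2 : 0 ≤ 1 / L * ∫ x in a..b, w x ^ (-θ) := by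
    apply mul_nonneg (by positivity)
    exact intervalIntegral.integral_nonneg hab.le
      (fun x _ => Real.rpow_nonneg (by linarith [hw1 x]) _)
  have hmul := mul_le_mul hF1 hF2 hPos2 (by positivity)
  calc (1 / L * ∫ x in a..b, w x ^ θ) * (1 / L * ∫ x in a..b, w x ^ (-θ))
      ≤ (4 * s ^ θ) * ((8 / (1 - θ) + 2) * s ^ (-θ)) := hmul
    _ = (32 / (1 - θ) + 8) * (s ^ θ * s ^ (-θ)) := by ring
    _ = 32 / (1 - θ) + 8 := by
        rw [Real.rpow_neg hs0.le, mul_inv_cancel₀ (ne_of_gt hsθpos), mul_one]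

/-- For `θ ∈ (-1,1)`, the truncated weights `w_N^θ` satisfy the `A₂` condition uniformly
in `N`: there is `c = c(θ)`, independent of `N`, such that for every bounded interval `Q`,
`(1/|Q| ∫_Q w_N^θ)(1/|Q| ∫_Q w_N^{-θ}) ≤ c`.  Here `w_N` is any smooth even function,
nondecreasing in `|x|`, with `w_N(x) = ⟨x⟩ = (1+x²)^{1/2}` for `|x| ≤ N`, `w_N(x) = 2N`
for `|x| ≥ 3N`, and `0 ≤ w_N' ≤ 1` on `[0,∞)`. -/
theorem truncated_weights_uniform_A2 (θ : ℝ) (hθ : θ ∈ Ioo (-1 : ℝ) 1) :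
    ∃ c : ℝ, 0 < c ∧ ∀ (N : ℕ), 0 < N → ∀ w : ℝ → ℝ,
      ContDiff ℝ (⊤ : ℕ∞) w →
      (∀ x : ℝ, w (-x) = w x) →
      (∀ x : ℝ, |x| ≤ (N : ℝ) → w x = Real.sqrt (1 + x ^ 2)) →
      (∀ x : ℝ, (3 * N : ℝ) ≤ |x| → w x = 2 * N) →
      (∀ x y : ℝ, 0 ≤ x → x ≤ y → w x ≤ w y) →
      (∀ x : ℝ, 0 ≤ x → 0 ≤ deriv w x) →
      (∀ x : ℝ, 0 ≤ x → deriv w x ≤ 1) →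
      ∀ a b : ℝ, a < b →
        (1 / (b - a) * ∫ x in a..b, w x ^ θ) *
          (1 / (b - a) * ∫ x in a..b, w x ^ (-θ)) ≤ c := by
  obtain ⟨hθ1, hθ2⟩ := hθ
  have habs : |θ| < 1 := abs_lt.mpr ⟨hθ1, hθ2⟩
  have hpos : 0 < 1 - |θ| := by linarith
  refine ⟨32 / (1 - |θ|) + 8, by positivity, ?_⟩
  intro N hN w hsm heven hmid hout hmono _ _ a b hab
  rcases le_or_gt 0 θ with hsign | hsign
  · rw [abs_of_nonneg hsign]
    exact truncA2_aux θ hsign hθ2 N hN w hsm heven hmid hout hmono a b hab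
  · rw [abs_of_neg hsign]
    have h := truncA2_aux (-θ) (by linarith) (by linarith) N hN w hsm heven hmid hout
      hmono a b hab
    rw [neg_neg] at h
    linarith [h]
end
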